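/- Fix a,b > 0 with a ≤ 1. Then Σ_{n=1}^N n·a·Γ(a+b)Γ(b+n-1)/(Γ(b)Γ(a+b+n) − Γ(a+b)Γ(b+n)) → ∞ as N → ∞. -/

import Mathlib

open Real Filter

/-- Probability that the n-th draw from a GDP(a,b,G₀) forms a new cluster. -/
noncomputable def gdpNewClusterProb (a b : ℝ) (n : ℕ) : ℝ :=
  (n : ℝ) * a * Gamma (a + b) * Gamma (b + n - 1) /
    (Gamma b * Gamma (a + b + n) - Gamma (a + b) * Gamma (b + n))

/-!
The denominator `D(n) = Γ(b) Γ(a+b+n) - Γ(a+b) Γ(b+n)` is positive for `n ≥ 1` by induction,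
since `D(0) = 0` and `D(n+1) = (b+n) D(n) + a Γ(b) Γ(a+b+n)`. For `n ≥ 2` it is at most
`Γ(b) Γ(a+b+n) ≤ Γ(b) Γ(b+n+1)`, because `a ≤ 1` and `Γ` is increasing on `[2, ∞)`. As
`Γ(b+n+1) = (b+n)(b+n-1) Γ(b+n-1)`, the `n`-th term is then at least a constant multiple of `1/n`,
and the harmonic series diverges.
-/

theorem tendsto_sum_range_atTop_of_div_succ_le {f : ℕ → ℝ} {c : ℝ} (hc : 0 < c)
    (hf : ∀ n, 0 ≤ f n) (hle : ∀ᶠ n : ℕ in atTop, c / ((n : ℝ) + 1) ≤ f n) :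
    Tendsto (fun N ↦ ∑ n ∈ Finset.range N, f n) atTop atTop := by
  rw [← not_summable_iff_tendsto_nat_atTop_of_nonneg hf]
  intro hsum
  have hharmonic : Summable fun n : ℕ ↦ c / ((n : ℝ) + 1) :=
    hsum.of_norm_bounded_eventually_nat <| hle.mono fun n hn ↦ by
      rwa [Real.norm_of_nonneg (by positivity)]
  refine Real.not_summable_one_div_natCast ((summable_nat_add_iff 1).1 ?_)
  simpa [div_eq_mul_inv, hc.ne'] using hharmonic.mul_left c⁻¹

noncomputable def gdpDenom (a b x : ℝ) : ℝ :=
  Gamma b * Gamma (a + b + x) - Gamma (a + b) * Gamma (b + x)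

section

variable {a b : ℝ}

theorem gdpNewClusterProb_eq (n : ℕ) :
    gdpNewClusterProb a b n = n * a * Gamma (a + b) * Gamma (b + n - 1) / gdpDenom a b n :=
  rfl

theorem gdpDenom_zero : gdpDenom a b 0 = 0 := by
  simp [gdpDenom, mul_comm]

theorem gdpDenom_add_one {x : ℝ} (hab : a + b + x ≠ 0) (hb : b + x ≠ 0) :
    gdpDenom a b (x + 1) = (b + x) * gdpDenom a b x + a * Gamma b * Gamma (a + b + x) := by
  simp only [gdpDenom, ← add_assoc, Gamma_add_one hab, Gamma_add_one hb]
  ring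

theorem gdpDenom_natCast_pos (ha : 0 < a) (hb : 0 < b) {n : ℕ} (hn : n ≠ 0) :
    0 < gdpDenom a b n := by
  induction n with
  | zero => contradiction
  | succ n ih =>
    have hprev : 0 ≤ gdpDenom a b n := by
      rcases eq_or_ne n 0 with rfl | hn
      · simp [gdpDenom_zero]
      · exact (ih hn).le
    have := Gamma_pos_of_pos hb
    have := Gamma_pos_of_pos (show 0 < a + b + n by positivity)
    push_cast
    rw [gdpDenom_add_one (by positivity) (by positivity)]
    positivity

theorem gdpNewClusterProb_nonneg (ha : 0 < a) (hb : 0 < b) (n : ℕ) :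
    0 ≤ gdpNewClusterProb a b n := by
  rcases eq_or_ne n 0 with rfl | hn
  · simp [gdpNewClusterProb]
  have := Gamma_pos_of_pos (show 0 < a + b by positivity)
  have := Gamma_pos_of_pos (show 0 < b + n - 1 by
    have : (1 : ℝ) ≤ n := by exact_mod_cast Nat.one_le_iff_ne_zero.2 hn
    linarith)
  have := gdpDenom_natCast_pos ha hb hn
  rw [gdpNewClusterProb_eq]
  positivity

theorem gdpDenom_le (ha : 0 < a) (hb : 0 < b) (ha1 : a ≤ 1) {x : ℝ} (hx : 2 ≤ a + b + x) :
    gdpDenom a b x ≤ Gamma b * Gamma (b + x + 1) := by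
  have hmono : Gamma (a + b + x) ≤ Gamma (b + x + 1) :=
    Gamma_strictMonoOn_Ici.monotoneOn hx (by simp only [Set.mem_Ici]; linarith) (by linarith)
  have := Gamma_pos_of_pos hb
  have := Gamma_pos_of_pos (show 0 < a + b by linarith)
  have := Gamma_pos_of_pos (show 0 < b + x by linarith)
  unfold gdpDenom
  nlinarith

theorem div_natCast_le_gdpNewClusterProb (ha : 0 < a) (hb : 0 < b) (ha1 : a ≤ 1) {n : ℕ}
    (hn : 2 ≤ n) :
    a * Gamma (a + b) / (Gamma b * (1 + b) ^ 2) / n ≤ gdpNewClusterProb a b n := by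
  have hn' : (2 : ℝ) ≤ n := by exact_mod_cast hn
  set y := b + n - 1
  have hy : 1 < y := by linarith
  have hΓb := Gamma_pos_of_pos hb
  have hΓab := Gamma_pos_of_pos (show 0 < a + b by linarith)
  have hΓy := Gamma_pos_of_pos (show 0 < y by linarith)
  have hD : gdpDenom a b n ≤ Gamma b * ((y + 1) * y * Gamma y) := by
    have := gdpDenom_le ha hb ha1 (x := n) (by linarith)
    rw [show b + n + 1 = y + 1 + 1 by ring, Gamma_add_one (by linarith),
      Gamma_add_one (by linarith)] at this
    exact this.trans_eq (by ring)
  have hpoly : (y + 1) * y ≤ ((1 + b) * n) ^ 2 := by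
    have : y + 1 ≤ (1 + b) * n := by nlinarith
    nlinarith
  calc a * Gamma (a + b) / (Gamma b * (1 + b) ^ 2) / n
      ≤ n * a * Gamma (a + b) / (Gamma b * ((y + 1) * y)) := by
        rw [div_div, div_le_div_iff₀ (by positivity) (mul_pos hΓb (by nlinarith))]
        calc a * Gamma (a + b) * (Gamma b * ((y + 1) * y))
            ≤ a * Gamma (a + b) * (Gamma b * ((1 + b) * n) ^ 2) := by gcongr
          _ = n * a * Gamma (a + b) * (Gamma b * (1 + b) ^ 2 * n) := by ring
    _ = n * a * Gamma (a + b) * Gamma y / (Gamma b * ((y + 1) * y * Gamma y)) := by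
        rw [show Gamma b * ((y + 1) * y * Gamma y) = Gamma b * ((y + 1) * y) * Gamma y by ring,
          mul_div_mul_right _ _ hΓy.ne']
    _ ≤ gdpNewClusterProb a b n := by
        rw [gdpNewClusterProb_eq]
        gcongr
        exact gdpDenom_natCast_pos ha hb (by omega)

end

theorem gdp_expected_clusters_unbounded (a b : ℝ) (ha : 0 < a) (hb : 0 < b) (ha1 : a ≤ 1) :
    Tendsto (fun N : ℕ => ∑ n ∈ Finset.range N, gdpNewClusterProb a b (n + 1))
      atTop atTop := by
  have hK : 0 < a * Gamma (a + b) / (Gamma b * (1 + b) ^ 2) := by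
    have := Gamma_pos_of_pos hb
    have := Gamma_pos_of_pos (add_pos ha hb)
    positivity
  refine tendsto_sum_range_atTop_of_div_succ_le hK
    (fun n ↦ gdpNewClusterProb_nonneg ha hb (n + 1)) ?_
  filter_upwards [eventually_ge_atTop 1] with n hn
  exact_mod_cast div_natCast_le_gdpNewClusterProb ha hb ha1 (by omega : 2 ≤ n + 1)
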